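/- arXiv:2508.21731 — 4 statements merged into one kernel-verified Lean document; each statement's English description precedes it below -/
import Mathlib

section
/- Let γ > 1, 0 < k < 1, G(π) = (1-π)·(π/(1-π))^γ, and b₁ = γk/(γ + k - 1). Then the pair (A₁, b₁) with A₁ = 1/G'(b₁) solves the smooth-fit system A₁·G(b₁) = b₁ - k and A₁·G'(b₁) = 1; equivalently, G'(b₁)·(b₁ - k) - G(b₁) = 0. -/
/-!
Since `G' = (γ - π) / (π (1 - π)) · G` on `(0, 1)`, the condition `G'(b₁)(b₁ - k) = G(b₁)` is
equivalent to `(γ - b₁)(b₁ - k) = b₁(1 - b₁)`, a rational identity in `γ, k` once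
`b₁ = γk/(γ + k - 1)` is substituted. The remaining two equations follow by dividing by
`G'(b₁)`, which is positive because `0 < b₁ < 1 < γ`.
-/

open Set

theorem hasDerivAt_one_sub_mul_odds_rpow (γ : ℝ) {π : ℝ} (h0 : 0 < π) (h1 : π < 1) :
    HasDerivAt (fun x => (1 - x) * (x / (1 - x)) ^ γ)
      ((γ - π) / (π * (1 - π)) * ((1 - π) * (π / (1 - π)) ^ γ)) π := by
  have h1π : 0 < 1 - π := sub_pos.2 h1
  have hodds_pos : 0 < π / (1 - π) := div_pos h0 h1π
  have hone_sub : HasDerivAt (fun x : ℝ => 1 - x) (-1) π := (hasDerivAt_id' π).const_sub 1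
  have hodds : HasDerivAt (fun x => x / (1 - x)) (1 / (1 - π) ^ 2) π :=
    ((hasDerivAt_id' π).div hone_sub h1π.ne').congr_deriv (by ring)
  refine (hone_sub.mul (hodds.rpow_const (p := γ) (Or.inl hodds_pos.ne'))).congr_deriv ?_
  rw [Real.rpow_sub hodds_pos, Real.rpow_one]
  field_simp
  ring

theorem smoothFit_boundary_mem_Ioo {γ k : ℝ} (hγ : 1 < γ) (hk0 : 0 < k) (hk1 : k < 1) :
    γ * k / (γ + k - 1) ∈ Ioo (0 : ℝ) 1 := by
  have hden : 0 < γ + k - 1 := by linarith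
  refine ⟨by positivity, (div_lt_one hden).2 ?_⟩
  nlinarith [mul_pos (sub_pos.2 hγ) (sub_pos.2 hk1)]

theorem smoothFit_boundary_identity {γ k : ℝ} (hden : γ + k - 1 ≠ 0) :
    (γ - γ * k / (γ + k - 1)) * (γ * k / (γ + k - 1) - k) =
      γ * k / (γ + k - 1) * (1 - γ * k / (γ + k - 1)) := by
  field_simp
  ring

theorem stmt_6 (γ k : ℝ) (hγ : 1 < γ) (hk0 : 0 < k) (hk1 : k < 1)
    (G : ℝ → ℝ) (hG : ∀ π ∈ Ioo (0:ℝ) 1, G π = (1 - π) * (π / (1 - π)) ^ γ)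
    (b₁ : ℝ) (hb : b₁ = γ * k / (γ + k - 1))
    (A₁ : ℝ) (hA : A₁ = 1 / deriv G b₁) :
    A₁ * G b₁ = b₁ - k ∧ A₁ * deriv G b₁ = 1 ∧
      deriv G b₁ * (b₁ - k) - G b₁ = 0 := by
  obtain ⟨hb0, hb1⟩ : b₁ ∈ Ioo (0 : ℝ) 1 := hb ▸ smoothFit_boundary_mem_Ioo hγ hk0 hk1
  have hfit : (γ - b₁) * (b₁ - k) = b₁ * (1 - b₁) := by
    subst hb
    exact smoothFit_boundary_identity (by linarith)
  have hGb : 0 < G b₁ := by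
    rw [hG b₁ ⟨hb0, hb1⟩]
    have : 0 < 1 - b₁ := by linarith
    positivity
  have hderiv : deriv G b₁ = (γ - b₁) / (b₁ * (1 - b₁)) * G b₁ := by
    rw [hG b₁ ⟨hb0, hb1⟩]
    refine ((hasDerivAt_one_sub_mul_odds_rpow γ hb0 hb1).congr_of_eventuallyEq ?_).deriv
    filter_upwards [isOpen_Ioo.mem_nhds ⟨hb0, hb1⟩] with x hx using hG x hx
  have hsmooth : deriv G b₁ * (b₁ - k) - G b₁ = 0 := by
    have : b₁ * (1 - b₁) ≠ 0 := by nlinarith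
    rw [hderiv]
    field_simp
    linear_combination G b₁ * hfit
  have hne : deriv G b₁ ≠ 0 := by
    rw [hderiv]
    have : 0 < γ - b₁ := by linarith
    have : 0 < 1 - b₁ := by linarith
    positivity
  subst hA
  refine ⟨?_, one_div_mul_cancel hne, hsmooth⟩
  rw [one_div_mul_eq_div, div_eq_iff hne]
  linarith
end

section
/- Let γ > 1, 0 < k < 1, G(π) = (1-π)·(π/(1-π))^γ on (0,1), and b₁ = γk/(γ+k-1). Define V̂₁(π) = π - k for π ≥ b₁ and V̂₁(π) = ((b₁-k)/G(b₁))·G(π) for π < b₁. Then V̂₁ is continuously differentiable on (0,1). -/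
/-!
On `(0, 1)` the function `G` satisfies `G' / G = (γ - π) / (π (1 - π))`. The constant
`(b₁ - k) / G b₁` makes the two pieces of `V̂₁` agree at `b₁`, and their slopes agree there iff
`(b₁ - k) (γ - b₁) = b₁ (1 - b₁)`, which is the equation solved by `b₁ = γk / (γ + k - 1)`.
Pasting two `C¹` functions that agree to first order at the junction gives a `C¹` function.
-/

open Set

theorem contDiffOn_one_of_hasDerivAt {𝕜 F : Type*} [NontriviallyNormedField 𝕜]
    [NormedAddCommGroup F] [NormedSpace 𝕜 F] {f f' : 𝕜 → F} {s : Set 𝕜} (hs : IsOpen s)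
    (hf : ∀ x ∈ s, HasDerivAt f (f' x) x) (hf' : ContinuousOn f' s) : ContDiffOn 𝕜 1 f s := by
  rw [contDiffOn_one_iff_derivWithin hs.uniqueDiffOn]
  refine ⟨fun x hx => (hf x hx).differentiableAt.differentiableWithinAt, hf'.congr fun x hx => ?_⟩
  rw [derivWithin_of_isOpen hs hx, (hf x hx).deriv]

section Pasting

variable {E : Type*} [NormedAddCommGroup E] [NormedSpace ℝ E] {f g f' g' : ℝ → E} {b : ℝ}

theorem hasDerivAt_ite_le {x : ℝ} (hf : HasDerivAt f (f' x) x) (hg : HasDerivAt g (g' x) x)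
    (hval : f b = g b) (hder : f' b = g' b) :
    HasDerivAt (fun y => if b ≤ y then f y else g y) (if b ≤ x then f' x else g' x) x := by
  rcases lt_trichotomy x b with hlt | rfl | hgt
  · rw [if_neg hlt.not_ge]
    refine hg.congr_of_eventuallyEq ?_
    filter_upwards [Iio_mem_nhds hlt] with y hy
    rw [if_neg (not_le.mpr hy)]
  · rw [if_pos le_rfl, ← hasDerivWithinAt_univ, ← Iic_union_Ici]
    refine HasDerivWithinAt.union ?_
      (hf.hasDerivWithinAt.congr (fun y hy => if_pos hy) (if_pos le_rfl))
    rw [hder]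
    refine hg.hasDerivWithinAt.congr (fun y hy => ?_) (by rw [if_pos le_rfl, hval])
    rcases (mem_Iic.mp hy).lt_or_eq with hy | rfl
    · rw [if_neg hy.not_ge]
    · rw [if_pos le_rfl, hval]
  · rw [if_pos hgt.le]
    refine hf.congr_of_eventuallyEq ?_
    filter_upwards [Ioi_mem_nhds hgt] with y hy
    rw [if_pos (le_of_lt hy)]

theorem contDiffOn_one_ite_le {s : Set ℝ} (hs : IsOpen s) (hf : ∀ x ∈ s, HasDerivAt f (f' x) x)
    (hg : ∀ x ∈ s, HasDerivAt g (g' x) x) (hf' : ContinuousOn f' s) (hg' : ContinuousOn g' s)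
    (hval : f b = g b) (hder : f' b = g' b) :
    ContDiffOn ℝ 1 (fun y => if b ≤ y then f y else g y) s := by
  refine contDiffOn_one_of_hasDerivAt hs
    (fun x hx => hasDerivAt_ite_le (hf x hx) (hg x hx) hval hder) ?_
  refine ContinuousOn.if (fun x hx => ?_) (hf'.mono inter_subset_left)
    (hg'.mono inter_subset_left)
  rw [show {y : ℝ | b ≤ y} = Ici b from rfl, frontier_Ici] at hx
  rw [mem_singleton_iff.mp hx.2, hder]

end Pasting

namespace OptimalStopping

noncomputable def G (γ π : ℝ) : ℝ := (1 - π) * (π / (1 - π)) ^ γ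

noncomputable def G' (γ π : ℝ) : ℝ := G γ π * ((γ - π) / (π * (1 - π)))

variable {γ π : ℝ}

theorem G_pos (hπ : π ∈ Ioo (0 : ℝ) 1) : 0 < G γ π := by
  have h1π : 0 < 1 - π := sub_pos.mpr hπ.2
  have hodds : 0 < π / (1 - π) := div_pos hπ.1 h1π
  unfold G
  positivity

theorem hasDerivAt_G (hπ : π ∈ Ioo (0 : ℝ) 1) :
    HasDerivAt (G γ) (G' γ π) π := by
  obtain ⟨hπ0, hπ1⟩ := hπ
  have h1π : 0 < 1 - π := sub_pos.mpr hπ1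
  have hodds : 0 < π / (1 - π) := div_pos hπ0 h1π
  have hsub : HasDerivAt (fun y : ℝ => 1 - y) (-1) π := by
    simpa using (hasDerivAt_id π).const_sub 1
  have hpow := ((hasDerivAt_id π).div hsub h1π.ne').rpow_const (p := γ) (Or.inl hodds.ne')
  refine (hsub.mul hpow).congr_deriv ?_
  simp only [Pi.div_apply, id]
  rw [G', G, Real.rpow_sub_one hodds.ne']
  field_simp
  ring

theorem continuousOn_G' (γ : ℝ) : ContinuousOn (G' γ) (Ioo 0 1) := by
  refine ContinuousOn.mul (fun π hπ => (hasDerivAt_G hπ).continuousAt.continuousWithinAt) ?_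
  refine ContinuousOn.div (by fun_prop) (by fun_prop) fun π hπ => ?_
  exact mul_ne_zero hπ.1.ne' (sub_pos.mpr hπ.2).ne'

theorem smooth_fit {k b : ℝ} (hD : γ + k - 1 ≠ 0) (hb : b = γ * k / (γ + k - 1)) :
    (b - k) * (γ - b) = b * (1 - b) := by
  subst hb
  field_simp
  ring

end OptimalStopping

open OptimalStopping in
theorem stmt_7 (γ k : ℝ) (hγ : 1 < γ) (hk0 : 0 < k) (hk1 : k < 1)
    (G : ℝ → ℝ) (hG : ∀ π ∈ Ioo (0:ℝ) 1, G π = (1 - π) * (π / (1 - π)) ^ γ)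
    (b₁ : ℝ) (hb : b₁ = γ * k / (γ + k - 1))
    (V : ℝ → ℝ)
    (hV : ∀ π : ℝ, V π = if b₁ ≤ π then π - k else ((b₁ - k) / G b₁) * G π) :
    ContDiffOn ℝ 1 V (Ioo (0:ℝ) 1) := by
  have hD : 0 < γ + k - 1 := by linarith
  have hb₁ : b₁ ∈ Ioo (0 : ℝ) 1 := by
    rw [hb, mem_Ioo, lt_div_iff₀ hD, div_lt_one hD]
    constructor <;> nlinarith
  have hGb₁ : G b₁ = OptimalStopping.G γ b₁ := hG b₁ hb₁
  set c := (b₁ - k) / OptimalStopping.G γ b₁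
  have hval : b₁ - k = c * OptimalStopping.G γ b₁ := (div_mul_cancel₀ _ (G_pos hb₁).ne').symm
  have hder : (1 : ℝ) = c * G' γ b₁ := by
    have hne : b₁ * (1 - b₁) ≠ 0 := mul_ne_zero hb₁.1.ne' (sub_pos.mpr hb₁.2).ne'
    rw [G', ← mul_assoc, ← hval, mul_div_assoc', eq_div_iff hne, one_mul, smooth_fit hD.ne' hb]
  refine (contDiffOn_one_ite_le (f' := fun _ => 1) isOpen_Ioo
    (fun x _ => (hasDerivAt_id x).sub_const k) (fun x hx => (hasDerivAt_G hx).const_mul c)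
    continuousOn_const (continuousOn_const.mul (continuousOn_G' γ)) hval hder).congr fun x hx => ?_
  rw [hV, hG x hx, hGb₁]
  rfl
end

section
/- Let γ > 1, 0 < k < 1, G(π) = (1-π)·(π/(1-π))^γ on (0,1), and b₁ = γk/(γ+k-1). Define V̂₁(π) = π - k for π ≥ b₁ and V̂₁(π) = ((b₁-k)/G(b₁))·G(π) for π < b₁. Then V̂₁(π) ≥ π - k for all π ∈ (0,1). -/
open Set

theorem stmt_8 (γ k : ℝ) (hγ : 1 < γ) (hk0 : 0 < k) (hk1 : k < 1)
    (G : ℝ → ℝ) (hG : ∀ π ∈ Ioo (0:ℝ) 1, G π = (1 - π) * (π / (1 - π)) ^ γ)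
    (b₁ : ℝ) (hb : b₁ = γ * k / (γ + k - 1))
    (V : ℝ → ℝ)
    (hV : ∀ π : ℝ, V π = if b₁ ≤ π then π - k else ((b₁ - k) / G b₁) * G π) :
    ∀ π ∈ Ioo (0:ℝ) 1, π - k ≤ V π := by
  have hD : 0 < γ + k - 1 := by linarith
  have hb10 : 0 < b₁ := by
    rw [hb]; positivity
  have hb11 : b₁ < 1 := by
    rw [hb, div_lt_one hD]; nlinarith
  have hb1k : k < b₁ := by
    rw [hb, lt_div_iff₀ hD]; nlinarith
  have hs₀ : 0 < 1 - b₁ := by linarith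
  have ht₀ : 0 < b₁ / (1 - b₁) := div_pos hb10 hs₀
  have hP : 0 < (b₁ / (1 - b₁)) ^ γ := Real.rpow_pos_of_pos ht₀ γ
  have hGb : G b₁ = (1 - b₁) * (b₁ / (1 - b₁)) ^ γ := hG b₁ ⟨hb10, hb11⟩
  have hGbpos : 0 < G b₁ := by rw [hGb]; positivity
  intro π hπ
  obtain ⟨hπ0, hπ1⟩ := hπ
  rw [hV]
  by_cases hle : b₁ ≤ π
  · simp [hle]
  · simp only [hle, if_false]
    have hπb : π < b₁ := lt_of_not_ge hle
    have hs : 0 < 1 - π := by linarith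
    have ht : 0 < π / (1 - π) := div_pos hπ0 hs
    set t := π / (1 - π) with htdef
    set t₀ := b₁ / (1 - b₁) with ht₀def
    -- Bernoulli: (t/t₀)^γ ≥ 1 + γ*(t/t₀ - 1)
    have hz : (-1 : ℝ) ≤ t / t₀ - 1 := by
      have : 0 < t / t₀ := div_pos ht ht₀
      linarith
    have hbern := one_add_mul_self_le_rpow_one_add hz (le_of_lt hγ)
    rw [show (1 : ℝ) + (t / t₀ - 1) = t / t₀ by ring] at hbern
    have hdiv : (t / t₀) ^ γ = t ^ γ / t₀ ^ γ :=
      Real.div_rpow (le_of_lt ht) (le_of_lt ht₀) γ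
    rw [hdiv] at hbern
    have hkey : t₀ ^ γ * (1 + γ * (t / t₀ - 1)) ≤ t ^ γ := by
      have h2 := (le_div_iff₀ hP).mp hbern
      calc t₀ ^ γ * (1 + γ * (t / t₀ - 1)) = (1 + γ * (t / t₀ - 1)) * t₀ ^ γ := by ring
        _ ≤ t ^ γ := h2
    have hc : 0 < (b₁ - k) / G b₁ := div_pos (by linarith) hGbpos
    have hGπ : G π = (1 - π) * t ^ γ := hG π ⟨hπ0, hπ1⟩
    have hmul : (b₁ - k) / G b₁ * ((1 - π) * (t₀ ^ γ * (1 + γ * (t / t₀ - 1))))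
        ≤ (b₁ - k) / G b₁ * G π := by
      rw [hGπ]
      apply mul_le_mul_of_nonneg_left _ (le_of_lt hc)
      exact mul_le_mul_of_nonneg_left hkey (le_of_lt hs)
    refine le_trans (le_of_eq ?_) hmul
    rw [hGb]
    have hPne : t₀ ^ γ ≠ 0 := ne_of_gt hP
    have hs₀ne : (1:ℝ) - b₁ ≠ 0 := ne_of_gt hs₀
    have h1 : (b₁ - k) / ((1 - b₁) * t₀ ^ γ) * ((1 - π) * (t₀ ^ γ * (1 + γ * (t / t₀ - 1))))
        = (b₁ - k) / (1 - b₁) * ((1 - π) * (1 + γ * (t / t₀ - 1))) := by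
      field_simp
    have hDne : γ + k - 1 ≠ 0 := ne_of_gt hD
    have hsne : (1:ℝ) - π ≠ 0 := ne_of_gt hs
    have hγ0 : γ ≠ 0 := by positivity
    have hγ1 : γ - 1 ≠ 0 := by linarith
    have hk1' : (1:ℝ) - k ≠ 0 := by linarith
    have hkne : k ≠ 0 := ne_of_gt hk0
    have hπne : π ≠ 0 := ne_of_gt hπ0
    have hbk : b₁ - k = k * (1 - k) / (γ + k - 1) := by
      rw [hb]; field_simp; ring
    have hb1' : 1 - b₁ = (γ - 1) * (1 - k) / (γ + k - 1) := by
      rw [hb]; field_simp; ring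
    rw [h1, htdef, ht₀def, hbk, hb1', hb]
    field_simp
    ring
end

section
/- Let 0 < k < 1, r > 0, ρ > 0, γ > 1 the positive root of γ² - γ - 2r/ρ² = 0, b₁ = γk/(γ+k-1), and G(π) = (1-π)(π/(1-π))^γ. Define V̂₁ as the smooth-fit candidate: V̂₁(π) = π - k for π ≥ b₁ and V̂₁(π) = ((b₁-k)/G(b₁))G(π) for π < b₁. Then for all π ∈ (0,1)\{b₁}, (ρ²π²(1-π)²/2)·V̂₁''(π) - r·V̂₁(π) ≤ 0. -/
/-!
Below `b₁` the candidate is a multiple of `G(π) = π^γ (1-π)^(1-γ)`, and for `y = x^p (1-x)^q` one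
has `x²(1-x)² y'' = (p(p-1)(1-x)² - 2pq x(1-x) + q(q-1)x²) y`, which for `p + q = 1` collapses to
`p(p-1) y`. Since `γ(γ-1) = 2r/ρ²`, the generator vanishes identically there. Above `b₁` the
candidate is affine, so the generator is `-r(π - k) ≤ 0` because `π > b₁ > k`.
-/

open Set Filter Topology

theorem hasDerivAt_rpow_mul_one_sub_rpow {p q x : ℝ} (hx0 : 0 < x) (hx1 : x < 1) :
    HasDerivAt (fun y : ℝ => y ^ p * (1 - y) ^ q)
      ((p * (1 - x) - q * x) * (x ^ (p - 1) * (1 - x) ^ (q - 1))) x := by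
  have h1x : (1 : ℝ) - x ≠ 0 := by linarith
  have hsub : HasDerivAt (fun y : ℝ => (1 - y) ^ q) (q * (1 - x) ^ (q - 1) * -1) x :=
    (Real.hasDerivAt_rpow_const (Or.inl h1x)).comp x ((hasDerivAt_id x).const_sub 1)
  refine ((Real.hasDerivAt_rpow_const (p := p) (Or.inl hx0.ne')).mul hsub).congr_deriv ?_
  rw [Real.rpow_sub_one hx0.ne', Real.rpow_sub_one h1x]
  field_simp
  ring

theorem sq_mul_sq_mul_deriv_deriv_rpow_mul_one_sub_rpow {p q x : ℝ} (hx0 : 0 < x) (hx1 : x < 1) :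
    x ^ 2 * (1 - x) ^ 2 * deriv (deriv fun y : ℝ => y ^ p * (1 - y) ^ q) x =
      (p * (p - 1) * (1 - x) ^ 2 - 2 * p * q * x * (1 - x) + q * (q - 1) * x ^ 2) *
        (x ^ p * (1 - x) ^ q) := by
  have h1x : (1 : ℝ) - x ≠ 0 := by linarith
  have hderiv : deriv (fun y : ℝ => y ^ p * (1 - y) ^ q) =ᶠ[𝓝 x]
      fun y => (p * (1 - y) - q * y) * (y ^ (p - 1) * (1 - y) ^ (q - 1)) := by
    filter_upwards [isOpen_Ioo.mem_nhds (show x ∈ Ioo (0 : ℝ) 1 from ⟨hx0, hx1⟩)] with y hy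
    exact (hasDerivAt_rpow_mul_one_sub_rpow hy.1 hy.2).deriv
  have hlin : HasDerivAt (fun y : ℝ => p * (1 - y) - q * y) (-p - q) x :=
    ((((hasDerivAt_id x).const_sub 1).const_mul p).sub
      ((hasDerivAt_id x).const_mul q)).congr_deriv (by simp)
  have hprod : HasDerivAt
      (fun y : ℝ => (p * (1 - y) - q * y) * (y ^ (p - 1) * (1 - y) ^ (q - 1)))
      ((-p - q) * (x ^ (p - 1) * (1 - x) ^ (q - 1)) + (p * (1 - x) - q * x) *
        (((p - 1) * (1 - x) - (q - 1) * x) * (x ^ (p - 1 - 1) * (1 - x) ^ (q - 1 - 1)))) x :=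
    hlin.mul (hasDerivAt_rpow_mul_one_sub_rpow hx0 hx1)
  rw [hderiv.deriv_eq, hprod.deriv,
    Real.rpow_sub_one hx0.ne', Real.rpow_sub_one h1x, Real.rpow_sub_one hx0.ne',
    Real.rpow_sub_one h1x, Real.rpow_sub_one hx0.ne', Real.rpow_sub_one h1x]
  field_simp
  ring

theorem one_sub_mul_div_one_sub_rpow {x : ℝ} (hx0 : 0 < x) (hx1 : x < 1) (γ : ℝ) :
    (1 - x) * (x / (1 - x)) ^ γ = x ^ γ * (1 - x) ^ (1 - γ) := by
  have h1x : 0 < 1 - x := by linarith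
  rw [Real.div_rpow hx0.le h1x.le, Real.rpow_sub h1x, Real.rpow_one]
  field_simp

theorem lt_mul_div_add_sub_one {k γ : ℝ} (hk0 : 0 < k) (hk1 : k < 1) (hγ : 1 < γ) :
    k < γ * k / (γ + k - 1) := by
  rw [lt_div_iff₀ (by linarith)]
  nlinarith [mul_pos hk0 (sub_pos.mpr hk1)]

section Generator

variable {ρ r : ℝ} {V : ℝ → ℝ} {π : ℝ}

theorem generator_eq_zero_of_eventuallyEq_const_mul {γ c : ℝ} (hr : r = ρ ^ 2 * (γ * (γ - 1)) / 2)
    (hπ0 : 0 < π) (hπ1 : π < 1) (hV : V =ᶠ[𝓝 π] fun y => c * (y ^ γ * (1 - y) ^ (1 - γ))) :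
    ρ ^ 2 * π ^ 2 * (1 - π) ^ 2 / 2 * deriv (deriv V) π - r * V π = 0 := by
  have hode := sq_mul_sq_mul_deriv_deriv_rpow_mul_one_sub_rpow (p := γ) (q := 1 - γ) hπ0 hπ1
  rw [hV.deriv.deriv_eq, hV.eq_of_nhds, deriv_const_mul_field', deriv_const_mul_field']
  linear_combination (ρ ^ 2 * c / 2) * hode - c * (π ^ γ * (1 - π) ^ (1 - γ)) * hr

theorem generator_nonpos_of_eventuallyEq_sub {k : ℝ} (hr : 0 ≤ r) (hk : k ≤ π)
    (hV : V =ᶠ[𝓝 π] fun y => y - k) :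
    ρ ^ 2 * π ^ 2 * (1 - π) ^ 2 / 2 * deriv (deriv V) π - r * V π ≤ 0 := by
  have hderiv : deriv V =ᶠ[𝓝 π] fun _ => 1 := by
    filter_upwards [hV.deriv] with y hy
    rw [hy, deriv_sub_const, deriv_id'']
  rw [hderiv.deriv_eq, hV.eq_of_nhds, deriv_const]
  nlinarith

end Generator

theorem stmt_10 (k r ρ γ : ℝ) (hk0 : 0 < k) (hk1 : k < 1) (hr : 0 < r) (hρ : 0 < ρ)
    (hγpos : 0 < γ) (hγ : γ ^ 2 - γ - 2 * r / ρ ^ 2 = 0)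
    (G : ℝ → ℝ) (hG : ∀ π ∈ Ioo (0:ℝ) 1, G π = (1 - π) * (π / (1 - π)) ^ γ)
    (b₁ : ℝ) (hb : b₁ = γ * k / (γ + k - 1))
    (V : ℝ → ℝ)
    (hV : ∀ π : ℝ, V π = if b₁ ≤ π then π - k else ((b₁ - k) / G b₁) * G π) :
    ∀ π ∈ Ioo (0:ℝ) 1, π ≠ b₁ →
      ρ ^ 2 * π ^ 2 * (1 - π) ^ 2 / 2 * deriv (deriv V) π - r * V π ≤ 0 := by
  intro π hπ hne
  have hr_eq : r = ρ ^ 2 * (γ * (γ - 1)) / 2 := by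
    field_simp at hγ
    linear_combination -hγ / 2
  have hγ1 : 1 < γ := by nlinarith [div_pos (mul_pos two_pos hr) (pow_pos hρ 2)]
  have hkb : k < b₁ := hb ▸ lt_mul_div_add_sub_one hk0 hk1 hγ1
  rcases hne.lt_or_gt with hlt | hgt
  · refine (generator_eq_zero_of_eventuallyEq_const_mul (c := (b₁ - k) / G b₁) hr_eq
      hπ.1 hπ.2 ?_).le
    filter_upwards [(isOpen_Ioo.inter isOpen_Iio).mem_nhds ⟨hπ, hlt⟩] with y ⟨hy, hyb⟩
    rw [hV, if_neg (not_le.mpr hyb), hG y hy, one_sub_mul_div_one_sub_rpow hy.1 hy.2]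
  · refine generator_nonpos_of_eventuallyEq_sub hr.le (hkb.trans hgt).le ?_
    filter_upwards [isOpen_Ioi.mem_nhds hgt] with y hy
    rw [hV, if_pos (le_of_lt hy)]
end
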